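/- Cloud-mixing (soft covering) lemma: Let Q_{UV} be a pmf on a finite alphabet 𝒰×𝒱 and R > I(U;V). For each n ≥ 1, let B^(n) = {U^n(m)}_{m=1}^{2^{nR}} be a random codebook of 2^{nR} codewords drawn independently, each with i.i.d. coordinates ~ Q_U, and for a fixed codebook define the output pmf P(v^n) = 2^{−nR} Σ_{m=1}^{2^{nR}} ∏_{k=1}^n Q_{V|U}(v_k | U_k(m)). Then E‖P(v^n) − ∏_{k=1}^n Q_V(v_k)‖_TV → 0 as n → ∞, where the expectation is over the random codebook. -/

import Mathlib

open scoped BigOperators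
open Finset Filter

noncomputable section

/-- `p` is a probability mass function on the finite type `α`. -/
def IsPmf {α : Type} [Fintype α] (p : α → ℝ) : Prop :=
  (∀ a, 0 ≤ p a) ∧ ∑ a, p a = 1

/-- Total variation distance `‖p − q‖_TV = (1/2) Σ |p − q|`. -/
def TV {α : Type} [Fintype α] (p q : α → ℝ) : ℝ :=
  (∑ a, |p a - q a|) / 2

/-- The distribution (law) of the random variable `f` when the underlying
probability mass function is `p`. -/
def lawOf {Ω α : Type} [Fintype Ω] [DecidableEq α]
    (p : Ω → ℝ) (f : Ω → α) : α → ℝ :=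
  fun a => ∑ ω, if f ω = a then p ω else 0

/-- Shannon entropy (base 2) of a pmf on a finite type. -/
def H2 {α : Type} [Fintype α] (p : α → ℝ) : ℝ :=
  -∑ a, p a * Real.logb 2 (p a)

/-- Entropy `H(X)` of a random variable `X` under the pmf `p`. -/
def ent {Ω α : Type} [Fintype Ω] [Fintype α] [DecidableEq α]
    (p : Ω → ℝ) (X : Ω → α) : ℝ :=
  H2 (lawOf p X)

/-- Mutual information `I(X;Y)` under the pmf `p`. -/
def mi {Ω α β : Type} [Fintype Ω] [Fintype α] [Fintype β]
    [DecidableEq α] [DecidableEq β]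
    (p : Ω → ℝ) (X : Ω → α) (Y : Ω → β) : ℝ :=
  ent p X + ent p Y - ent p (fun ω => (X ω, Y ω))

/-- Conditional mutual information `I(X;Y|W)` under the pmf `p`. -/
def cmi {Ω α β γ : Type} [Fintype Ω] [Fintype α] [Fintype β] [Fintype γ]
    [DecidableEq α] [DecidableEq β] [DecidableEq γ]
    (p : Ω → ℝ) (X : Ω → α) (Y : Ω → β) (W : Ω → γ) : ℝ :=
  ent p (fun ω => (X ω, W ω)) + ent p (fun ω => (Y ω, W ω))
    - ent p (fun ω => (X ω, Y ω, W ω)) - ent p W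

/-- `X` and `Y` are conditionally independent given `W` under `p`
(the Markov chain `X − W − Y`). -/
def CondIndep {Ω α β γ : Type} [Fintype Ω] [Fintype α] [Fintype β] [Fintype γ]
    [DecidableEq α] [DecidableEq β] [DecidableEq γ]
    (p : Ω → ℝ) (X : Ω → α) (Y : Ω → β) (W : Ω → γ) : Prop :=
  ∀ x y w,
    lawOf p (fun ω => (X ω, Y ω, W ω)) (x, y, w) * lawOf p W w
      = lawOf p (fun ω => (X ω, W ω)) (x, w) * lawOf p (fun ω => (Y ω, W ω)) (y, w)

/-- `X` and `Y` are independent under `p`. -/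
def IndepRV {Ω α β : Type} [Fintype Ω] [Fintype α] [Fintype β]
    [DecidableEq α] [DecidableEq β]
    (p : Ω → ℝ) (X : Ω → α) (Y : Ω → β) : Prop :=
  ∀ a b, lawOf p (fun ω => (X ω, Y ω)) (a, b) = lawOf p X a * lawOf p Y b

/-!
Split the product channel `W^n(v|u)` into its typical part, where
`W^n(v|u) ≤ 2^{n(I+δ)} Q_V^n(v)`, and the rest. Averaged over `M` independent codewords, the typical
part deviates from its mean `Q_V^n` by `O(√(2^{n(I+δ)}/M))` in expected `ℓ¹` norm, by a second
moment bound. The atypical part has mass `P(∑ₖ ι(Uₖ;Vₖ) > n(I+δ))` for the information density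
`ι`, whose mean is `I = I(U;V)`, so by Chebyshev it is `O(1/n)`. With `M ≥ 2^{n(I+2δ)}` both terms
vanish.
-/

def pmfPi {ι α : Type} [Fintype ι] (p : α → ℝ) (x : ι → α) : ℝ :=
  ∏ i, p (x i)

section Pi

variable {ι α : Type} [Fintype ι] [DecidableEq ι] [Fintype α] {p : α → ℝ}

lemma sum_pmfPi_mul_prod (f : ι → α → ℝ) :
    ∑ x, pmfPi p x * ∏ i, f i (x i) = ∏ i, ∑ a, p a * f i a := by
  simp only [pmfPi, ← prod_mul_distrib]
  exact (Fintype.prod_sum fun i a => p a * f i a).symm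

lemma IsPmf.pi (hp : IsPmf p) : IsPmf (pmfPi (ι := ι) p) := by
  refine ⟨fun x => prod_nonneg fun i _ => hp.1 (x i), ?_⟩
  simpa [hp.2] using sum_pmfPi_mul_prod (p := p) fun (_ : ι) _ => 1

lemma sum_pmfPi_mul_apply (hp : ∑ a, p a = 1) (h : α → ℝ) (j : ι) :
    ∑ x, pmfPi p x * h (x j) = ∑ a, p a * h a := by
  simpa [apply_ite, hp] using sum_pmfPi_mul_prod (p := p) fun i a => if i = j then h a else 1

lemma sum_pmfPi_mul_apply_mul_apply (hp : ∑ a, p a = 1) (h g : α → ℝ) {j k : ι}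
    (hjk : j ≠ k) :
    ∑ x, pmfPi p x * (h (x j) * g (x k)) = (∑ a, p a * h a) * ∑ a, p a * g a := by
  have hfactor : ∀ i, ∑ a, p a * ((if i = j then h a else 1) * if i = k then g a else 1)
      = (if i = j then ∑ a, p a * h a else 1) * if i = k then ∑ a, p a * g a else 1 := by
    intro i
    by_cases hij : i = j <;> by_cases hik : i = k <;> simp_all
  have := sum_pmfPi_mul_prod (p := p) fun i a =>
    (if i = j then h a else 1) * (if i = k then g a else 1)
  simpa only [prod_mul_distrib, Fintype.prod_ite_eq', hfactor] using this

lemma sum_pmfPi_mul_sum_sq (hp : ∑ a, p a = 1) (c : α → ℝ) (hc : ∑ a, p a * c a = 0) :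
    ∑ x : ι → α, pmfPi p x * (∑ i, c (x i)) ^ 2 = Fintype.card ι * ∑ a, p a * c a ^ 2 := by
  have hpair : ∀ j k : ι, ∑ x, pmfPi p x * (c (x j) * c (x k))
      = if j = k then ∑ a, p a * c a ^ 2 else 0 := by
    intro j k
    split_ifs with hjk
    · subst hjk
      simpa only [← sq] using sum_pmfPi_mul_apply hp (fun a => c a ^ 2) j
    · rw [sum_pmfPi_mul_apply_mul_apply hp c c hjk, hc, zero_mul]
  simp_rw [sq (Finset.sum _ _), sum_mul_sum, mul_sum]
  rw [sum_comm]
  simp_rw [sum_comm (γ := ι → α), hpair]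
  simp [mul_sum]

end Pi

section Moments

variable {α : Type} [Fintype α] {p : α → ℝ}

lemma sum_mul_abs_le_sqrt_sum_mul_sq (hp : IsPmf p) (f : α → ℝ) :
    ∑ a, p a * |f a| ≤ √(∑ a, p a * f a ^ 2) := by
  apply Real.le_sqrt_of_sq_le
  simpa only [sq_abs] using Real.pow_arith_mean_le_arith_mean_pow univ p (fun a => |f a|)
    (fun a _ => hp.1 a) hp.2 (fun a _ => abs_nonneg _) 2

lemma sum_mul_sub_mean_sq (hp : ∑ a, p a = 1) (f : α → ℝ) :
    ∑ a, p a * (f a - ∑ b, p b * f b) ^ 2 = ∑ a, p a * f a ^ 2 - (∑ a, p a * f a) ^ 2 := by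
  set μ := ∑ b, p b * f b
  have hexpand : ∀ a, p a * (f a - μ) ^ 2 = p a * f a ^ 2 - 2 * μ * (p a * f a) + μ ^ 2 * p a :=
    fun a => by ring
  simp only [hexpand, sum_add_distrib, sum_sub_distrib, ← mul_sum, hp]
  ring

lemma sum_mul_sub_mean_eq_zero (hp : ∑ a, p a = 1) (f : α → ℝ) :
    ∑ a, p a * (f a - ∑ b, p b * f b) = 0 := by
  simp only [mul_sub, sum_sub_distrib, ← sum_mul, hp, one_mul, sub_self]

lemma sum_pmfPi_mul_abs_avg_sub_le (hp : IsPmf p) (G : α → ℝ) {M : ℕ} (hM : 0 < M) :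
    ∑ x : Fin M → α, pmfPi p x * |1 / (M : ℝ) * ∑ m, G (x m) - ∑ a, p a * G a|
      ≤ √((∑ a, p a * G a ^ 2) / M) := by
  set μ := ∑ a, p a * G a
  have hM' : (M : ℝ) ≠ 0 := by positivity
  have hcentered : ∑ a, p a * (G a - μ) = 0 := sum_mul_sub_mean_eq_zero hp.2 G
  have havg : ∀ x : Fin M → α, 1 / (M : ℝ) * ∑ m, G (x m) - μ = (∑ m, (G (x m) - μ)) / M := by
    intro x
    simp only [sum_sub_distrib, sum_const, card_univ, Fintype.card_fin,
      nsmul_eq_mul]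
    field_simp
  calc _ ≤ √(∑ x : Fin M → α, pmfPi p x * (1 / (M : ℝ) * ∑ m, G (x m) - μ) ^ 2) :=
        sum_mul_abs_le_sqrt_sum_mul_sq hp.pi _
    _ = √((∑ a, p a * (G a - μ) ^ 2) / M) := by
        simp_rw [havg, div_pow, mul_div_assoc']
        rw [← sum_div, sum_pmfPi_mul_sum_sq hp.2 _ hcentered, Fintype.card_fin]
        field_simp
    _ ≤ √((∑ a, p a * G a ^ 2) / M) := by
        rw [sum_mul_sub_mean_sq hp.2]
        gcongr
        nlinarith [sq_nonneg μ]

lemma sum_pmfPi_mul_avg (hp : ∑ a, p a = 1) (f : α → ℝ) {M : ℕ} (hM : 0 < M) :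
    ∑ x : Fin M → α, pmfPi p x * (1 / (M : ℝ) * ∑ m, f (x m)) = ∑ a, p a * f a := by
  simp_rw [mul_sum, mul_left_comm (pmfPi p _)]
  rw [sum_comm]
  simp_rw [← mul_sum, sum_pmfPi_mul_apply hp]
  simp only [sum_const, card_univ, Fintype.card_fin, nsmul_eq_mul]
  field_simp

lemma sum_filter_lt_le_sum_mul_sq_div (hp : ∀ a, 0 ≤ p a) (f : α → ℝ) {t : ℝ} (ht : 0 < t) :
    ∑ a with t < f a, p a ≤ (∑ a, p a * f a ^ 2) / t ^ 2 := by
  rw [sum_filter, sum_div]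
  gcongr with a
  split_ifs with hta
  · rw [le_div_iff₀ (by positivity)]
    exact mul_le_mul_of_nonneg_left (pow_le_pow_left₀ ht.le hta.le 2) (hp a)
  · exact div_nonneg (mul_nonneg (hp a) (sq_nonneg _)) (sq_nonneg _)

variable {ι : Type} [Fintype ι] [DecidableEq ι]

lemma sum_pmfPi_filter_lt_sum_le [Nonempty ι] (hp : IsPmf p) (h : α → ℝ) {δ : ℝ} (hδ : 0 < δ) :
    ∑ z : ι → α with Fintype.card ι * (∑ a, p a * h a + δ) < ∑ i, h (z i), pmfPi p z
      ≤ (∑ a, p a * (h a - ∑ b, p b * h b) ^ 2) / (δ ^ 2 * Fintype.card ι) := by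
  set μ := ∑ b, p b * h b
  have hcard : (0 : ℝ) < Fintype.card ι := by exact_mod_cast Fintype.card_pos
  have hcentered : ∑ a, p a * (h a - μ) = 0 := sum_mul_sub_mean_eq_zero hp.2 h
  have hshift : ∀ z : ι → α, ∑ i, (h (z i) - μ) = ∑ i, h (z i) - Fintype.card ι * μ := by
    intro z
    simp [sum_sub_distrib]
  calc _ = ∑ z : ι → α with Fintype.card ι * δ < ∑ i, (h (z i) - μ), pmfPi p z := by
        congr 1
        ext z
        simp only [mem_filter, mem_univ, true_and, hshift]
        constructor <;> intro hz <;> linarith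
    _ ≤ (∑ z : ι → α, pmfPi p z * (∑ i, (h (z i) - μ)) ^ 2) / (Fintype.card ι * δ) ^ 2 :=
        sum_filter_lt_le_sum_mul_sq_div hp.pi.1 _ (by positivity)
    _ = _ := by
        rw [sum_pmfPi_mul_sum_sq hp.2 _ hcentered]
        field_simp

end Moments

lemma abs_add_sub_add_le {a b c d : ℝ} (hb : 0 ≤ b) (hd : 0 ≤ d) :
    |a + b - (c + d)| ≤ |a - c| + (b + d) := by
  rw [abs_le]
  constructor <;> linarith [le_abs_self (a - c), neg_abs_le (a - c)]

section SoftCovering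

variable {α γ : Type} [Fintype α] [Fintype γ] {p : α → ℝ}

def outputPmf (p : α → ℝ) (W : α → γ → ℝ) (v : γ) : ℝ :=
  ∑ a, p a * W a v

lemma IsPmf.outputPmf (hp : IsPmf p) {W : α → γ → ℝ} (hW : ∀ a, IsPmf (W a)) :
    IsPmf (outputPmf p W) := by
  refine ⟨fun v => sum_nonneg fun a _ => mul_nonneg (hp.1 a) ((hW a).1 v), ?_⟩
  simp only [_root_.outputPmf]
  rw [sum_comm]
  simp [← mul_sum, (hW _).2, hp.2]

lemma sum_pmfPi_mul_sum_abs_avg_sub_le (hp : IsPmf p) {Q : γ → ℝ} (hQ : IsPmf Q)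
    (g : α → γ → ℝ) {K : ℝ} (hg : ∀ v, ∑ a, p a * g a v ^ 2 ≤ K * Q v ^ 2)
    {M : ℕ} (hM : 0 < M) :
    ∑ x : Fin M → α, pmfPi p x * ∑ v, |1 / (M : ℝ) * ∑ m, g (x m) v - ∑ a, p a * g a v|
      ≤ √(K / M) := by
  simp only [mul_sum _ _ (pmfPi p _)]
  rw [sum_comm]
  calc _ ≤ ∑ v, √(K * Q v ^ 2 / M) := sum_le_sum fun v _ =>
        (sum_pmfPi_mul_abs_avg_sub_le hp (g · v) hM).trans (by gcongr; exact hg v)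
    _ = √(K / M) := by
        simp_rw [mul_div_right_comm K, Real.sqrt_mul' _ (sq_nonneg _), Real.sqrt_sq (hQ.1 _),
          ← mul_sum, hQ.2, mul_one]

lemma sum_pmfPi_mul_sum_avg_add_mean (hp : IsPmf p) (f : α → γ → ℝ) {M : ℕ} (hM : 0 < M) :
    ∑ x : Fin M → α, pmfPi p x * ∑ v, (1 / (M : ℝ) * ∑ m, f (x m) v + ∑ a, p a * f a v)
      = 2 * ∑ v, ∑ a, p a * f a v := by
  rw [sum_congr rfl fun x _ => mul_sum _ _ _, sum_comm, mul_sum]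
  refine sum_congr rfl fun v _ => ?_
  rw [sum_congr rfl fun x _ => mul_add _ _ _, sum_add_distrib,
    sum_pmfPi_mul_avg hp.2 (f · v) hM, ← sum_mul, hp.pi.2]
  ring

theorem sum_pmfPi_mul_TV_le {W : α → γ → ℝ} (hp : IsPmf p) (hW : ∀ a, IsPmf (W a)) {K : ℝ}
    (hK : 0 ≤ K) {M : ℕ} (hM : 0 < M) :
    ∑ x : Fin M → α, pmfPi p x * TV (fun v => 1 / (M : ℝ) * ∑ m, W (x m) v) (outputPmf p W)
      ≤ √(K / M) / 2 + ∑ a, ∑ v with K * outputPmf p W v < W a v, p a * W a v := by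
  set Q := outputPmf p W
  have hQ : IsPmf Q := hp.outputPmf hW
  set g : α → γ → ℝ := fun a v => if W a v ≤ K * Q v then W a v else 0
  set g' : α → γ → ℝ := fun a v => if W a v ≤ K * Q v then 0 else W a v
  have hg' : ∀ a v, 0 ≤ g' a v := fun a v => by
    simp only [g']; split_ifs <;> simp [(hW a).1 v]
  have hg : ∀ v, ∑ a, p a * g a v ^ 2 ≤ K * Q v ^ 2 := fun v => calc
    _ ≤ ∑ a, K * Q v * (p a * W a v) := sum_le_sum fun a _ => by
        simp only [g]
        split_ifs with h
        · nlinarith [mul_nonneg (hp.1 a) ((hW a).1 v)]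
        · simp [mul_nonneg (mul_nonneg hK (hQ.1 v)) (mul_nonneg (hp.1 a) ((hW a).1 v))]
    _ = K * Q v ^ 2 := by rw [← mul_sum]; simp only [Q, _root_.outputPmf]; ring
  have htriangle : ∀ (x : Fin M → α) v, |1 / (M : ℝ) * ∑ m, W (x m) v - Q v|
      ≤ |1 / (M : ℝ) * ∑ m, g (x m) v - ∑ a, p a * g a v|
        + (1 / (M : ℝ) * ∑ m, g' (x m) v + ∑ a, p a * g' a v) := fun x v => by
    have hsplit : ∀ a, W a v = g a v + g' a v := fun a => by simp only [g, g']; split_ifs <;> simp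
    simp only [Q, _root_.outputPmf, hsplit, sum_add_distrib, mul_add]
    exact abs_add_sub_add_le (mul_nonneg (by positivity) (sum_nonneg fun m _ => hg' _ _))
      (sum_nonneg fun a _ => mul_nonneg (hp.1 a) (hg' a v))
  have hatypical : ∑ a, ∑ v with K * Q v < W a v, p a * W a v = ∑ v, ∑ a, p a * g' a v := by
    simp only [sum_filter, g', mul_ite, mul_zero, ← not_le, ite_not]
    exact sum_comm
  calc _ ≤ (∑ x : Fin M → α, pmfPi p x *
          ∑ v, |1 / (M : ℝ) * ∑ m, g (x m) v - ∑ a, p a * g a v|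
        + ∑ x : Fin M → α, pmfPi p x *
          ∑ v, (1 / (M : ℝ) * ∑ m, g' (x m) v + ∑ a, p a * g' a v)) / 2 := by
        rw [← sum_add_distrib, sum_div]
        refine sum_le_sum fun x _ => ?_
        rw [TV, ← mul_add, ← sum_add_distrib, mul_div_assoc]
        exact mul_le_mul_of_nonneg_left (by gcongr with v; exact htriangle x v) (hp.pi.1 x)
    _ ≤ (√(K / M) + 2 * ∑ v, ∑ a, p a * g' a v) / 2 := by
        rw [sum_pmfPi_mul_sum_avg_add_mean hp g' hM]
        gcongr
        exact sum_pmfPi_mul_sum_abs_avg_sub_le hp hQ g hg hM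
    _ = _ := by rw [hatypical]; ring

end SoftCovering

lemma prod_le_two_rpow_mul_prod {ι : Type} [Fintype ι] {a b : ι → ℝ} (ha : ∀ i, 0 < a i)
    (hb : ∀ i, 0 < b i) {θ : ℝ} (h : ∑ i, (Real.logb 2 (a i) - Real.logb 2 (b i)) ≤ θ) :
    ∏ i, a i ≤ 2 ^ θ * ∏ i, b i := by
  have hexp : ∀ c : ι → ℝ, (∀ i, 0 < c i) → ∏ i, c i = 2 ^ ∑ i, Real.logb 2 (c i) := fun c hc => by
    rw [Real.rpow_sum_of_pos two_pos]
    exact prod_congr rfl fun i _ => (Real.rpow_logb two_pos (by norm_num) (hc i)).symm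
  rw [hexp a ha, hexp b hb, ← Real.rpow_add two_pos]
  gcongr
  · norm_num
  · rw [sum_sub_distrib] at h
    linarith

section Channel

variable {ι 𝒰 𝒱 : Type} [Fintype ι] {QU : 𝒰 → ℝ} {W : 𝒰 → 𝒱 → ℝ}

def channelPi (W : 𝒰 → 𝒱 → ℝ) (u : ι → 𝒰) (v : ι → 𝒱) : ℝ :=
  ∏ i, W (u i) (v i)

def jointPmf (QU : 𝒰 → ℝ) (W : 𝒰 → 𝒱 → ℝ) (z : 𝒰 × 𝒱) : ℝ :=
  QU z.1 * W z.1 z.2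

-- `Real.logb 2 0 = 0`: only values on the support of the joint pmf carry meaning.
def infoDensity [Fintype 𝒰] (QU : 𝒰 → ℝ) (W : 𝒰 → 𝒱 → ℝ) (u : 𝒰) (v : 𝒱) : ℝ :=
  Real.logb 2 (W u v) - Real.logb 2 (outputPmf QU W v)

lemma IsPmf.channelPi [DecidableEq ι] [Fintype 𝒱] (hW : ∀ u, IsPmf (W u)) (u : ι → 𝒰) :
    IsPmf (channelPi W u) :=
  ⟨fun v => prod_nonneg fun i _ => (hW _).1 _,
    by simp [_root_.channelPi, ← Fintype.prod_sum, (hW _).2]⟩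

lemma IsPmf.jointPmf [Fintype 𝒰] [Fintype 𝒱] (hQU : IsPmf QU) (hW : ∀ u, IsPmf (W u)) :
    IsPmf (jointPmf QU W) := by
  refine ⟨fun z => mul_nonneg (hQU.1 _) ((hW _).1 _), ?_⟩
  simp [_root_.jointPmf, Fintype.sum_prod_type, ← mul_sum, (hW _).2, hQU.2]

lemma outputPmf_pmfPi_channelPi [DecidableEq ι] [Fintype 𝒰] (v : ι → 𝒱) :
    outputPmf (pmfPi QU) (channelPi W) v = ∏ i, outputPmf QU W (v i) := by
  simp only [outputPmf, pmfPi, channelPi, ← prod_mul_distrib]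
  exact (Fintype.prod_sum fun i a => QU a * W a (v i)).symm

lemma channelPi_le_of_sum_infoDensity_le [Fintype 𝒰] [Fintype 𝒱] (hQU : IsPmf QU)
    (hW : ∀ u, IsPmf (W u)) {u : ι → 𝒰} {v : ι → 𝒱} (hpos : pmfPi QU u * channelPi W u v ≠ 0)
    {θ : ℝ} (hθ : ∑ i, infoDensity QU W (u i) (v i) ≤ θ) :
    channelPi W u v ≤ 2 ^ θ * ∏ i, outputPmf QU W (v i) := by
  simp only [pmfPi, channelPi, ← prod_mul_distrib, prod_ne_zero_iff,
    mem_univ, true_implies, mul_ne_zero_iff] at hpos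
  have hW0 : ∀ i, 0 < W (u i) (v i) := fun i => ((hW _).1 _).lt_of_ne' (hpos i).2
  refine prod_le_two_rpow_mul_prod hW0 (fun i => ?_) hθ
  calc 0 < QU (u i) * W (u i) (v i) := mul_pos ((hQU.1 _).lt_of_ne' (hpos i).1) (hW0 i)
    _ ≤ outputPmf QU W (v i) := single_le_sum (f := fun a => QU a * W a (v i))
        (fun a _ => mul_nonneg (hQU.1 a) ((hW a).1 _)) (mem_univ _)

lemma sum_filter_pmfPi_jointPmf [DecidableEq ι] [Fintype 𝒰] [Fintype 𝒱]
    (P : (ι → 𝒰) → (ι → 𝒱) → Prop) [∀ u v, Decidable (P u v)] :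
    ∑ z : ι → 𝒰 × 𝒱 with P (fun i => (z i).1) (fun i => (z i).2), pmfPi (jointPmf QU W) z
      = ∑ u, ∑ v with P u v, pmfPi QU u * channelPi W u v := by
  simp only [sum_filter, ← Fintype.sum_prod_type']
  refine Fintype.sum_equiv (Equiv.arrowProdEquivProdArrow ι (fun _ => 𝒰) (fun _ => 𝒱)) _ _
    fun z => ?_
  simp only [pmfPi, channelPi, jointPmf, prod_mul_distrib]
  rfl

lemma sum_filter_lt_channelPi_le [DecidableEq ι] [Fintype 𝒰] [Fintype 𝒱] (hQU : IsPmf QU)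
    (hW : ∀ u, IsPmf (W u)) (θ : ℝ) :
    ∑ u : ι → 𝒰, ∑ v with 2 ^ θ * outputPmf (pmfPi QU) (channelPi W) v < channelPi W u v,
        pmfPi QU u * channelPi W u v
      ≤ ∑ z : ι → 𝒰 × 𝒱 with θ < ∑ i, infoDensity QU W (z i).1 (z i).2,
        pmfPi (jointPmf QU W) z := by
  rw [sum_filter_pmfPi_jointPmf fun u v => θ < ∑ i, infoDensity QU W (u i) (v i)]
  refine sum_le_sum fun u _ => ?_
  simp only [sum_filter, outputPmf_pmfPi_channelPi]
  refine sum_le_sum fun v _ => ?_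
  have hnonneg : 0 ≤ pmfPi QU u * channelPi W u v :=
    mul_nonneg (hQU.pi.1 u) ((IsPmf.channelPi hW u).1 v)
  split_ifs with hatyp hθ hatyp
  · exact le_rfl
  · by_contra hpos
    exact (channelPi_le_of_sum_infoDensity_le hQU hW
      (fun h0 => hpos h0.le) (not_lt.1 hθ)).not_gt hatyp
  · exact hnonneg
  · exact le_rfl

end Channel

section MutualInformation

variable {𝒰 𝒱 : Type} [Fintype 𝒰] [Fintype 𝒱] {QU : 𝒰 → ℝ} {W : 𝒰 → 𝒱 → ℝ}

lemma lawOf_jointPmf_fst [DecidableEq 𝒰] (hW : ∀ u, IsPmf (W u)) :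
    lawOf (jointPmf QU W) Prod.fst = QU := by
  ext u
  simp [lawOf, jointPmf, Fintype.sum_prod_type, ← mul_sum, (hW _).2]

lemma lawOf_jointPmf_snd [DecidableEq 𝒱] : lawOf (jointPmf QU W) Prod.snd = outputPmf QU W := by
  ext v
  simp [lawOf, jointPmf, outputPmf, Fintype.sum_prod_type]

lemma lawOf_fst_snd [DecidableEq 𝒰] [DecidableEq 𝒱] (p : 𝒰 × 𝒱 → ℝ) :
    lawOf p (fun z => (z.1, z.2)) = p := by
  ext z
  simp [lawOf]

lemma mi_jointPmf [DecidableEq 𝒰] [DecidableEq 𝒱] (hW : ∀ u, IsPmf (W u)) :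
    mi (jointPmf QU W) Prod.fst Prod.snd
      = ∑ z, jointPmf QU W z * infoDensity QU W z.1 z.2 := by
  have hlog : ∀ z : 𝒰 × 𝒱, jointPmf QU W z * Real.logb 2 (jointPmf QU W z)
      = jointPmf QU W z * Real.logb 2 (QU z.1) + jointPmf QU W z * Real.logb 2 (W z.1 z.2) := by
    intro z
    by_cases h : jointPmf QU W z = 0
    · simp [h]
    · simp only [jointPmf] at h ⊢
      rw [Real.logb_mul (left_ne_zero_of_mul h) (right_ne_zero_of_mul h)]
      ring
  have hfst : ∑ z : 𝒰 × 𝒱, jointPmf QU W z * Real.logb 2 (QU z.1)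
      = ∑ u, QU u * Real.logb 2 (QU u) := by
    simp [jointPmf, Fintype.sum_prod_type, ← sum_mul, ← mul_sum, (hW _).2]
  have hsnd : ∑ z : 𝒰 × 𝒱, jointPmf QU W z * Real.logb 2 (outputPmf QU W z.2)
      = ∑ v, outputPmf QU W v * Real.logb 2 (outputPmf QU W v) := by
    rw [Fintype.sum_prod_type, sum_comm]
    simp [jointPmf, outputPmf, sum_mul]
  simp only [mi, ent, H2, lawOf_jointPmf_fst hW, lawOf_jointPmf_snd, lawOf_fst_snd, hlog,
    infoDensity, mul_sub, sum_sub_distrib, sum_add_distrib, hfst, hsnd]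
  ring

end MutualInformation

theorem sum_codebook_TV_le {𝒰 𝒱 : Type} [Fintype 𝒰] [Fintype 𝒱] {QU : 𝒰 → ℝ}
    {W : 𝒰 → 𝒱 → ℝ} (hQU : IsPmf QU) (hW : ∀ u, IsPmf (W u)) {I δ : ℝ}
    (hI : ∑ z, jointPmf QU W z * infoDensity QU W z.1 z.2 = I) (hδ : 0 < δ) {n M : ℕ}
    (hn : 0 < n) (hM : (2 : ℝ) ^ (n * (I + 2 * δ)) ≤ M) :
    ∑ B : Fin M → Fin n → 𝒰, pmfPi (pmfPi QU) B *
        TV (fun v => 1 / (M : ℝ) * ∑ m, channelPi W (B m) v) (fun v => ∏ k, outputPmf QU W (v k))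
      ≤ (2 ^ (-δ / 2)) ^ n / 2
        + (∑ z, jointPmf QU W z * (infoDensity QU W z.1 z.2 - I) ^ 2) / δ ^ 2 / n := by
  have hM0 : 0 < M := by exact_mod_cast (Real.rpow_pos_of_pos two_pos _).trans_le hM
  have : Nonempty (Fin n) := ⟨⟨0, hn⟩⟩
  have hout : (fun v : Fin n → 𝒱 => ∏ k, outputPmf QU W (v k))
      = outputPmf (pmfPi QU) (channelPi W) :=
    funext fun v => (outputPmf_pmfPi_channelPi v).symm
  rw [hout]
  refine (sum_pmfPi_mul_TV_le hQU.pi (IsPmf.channelPi hW) (K := 2 ^ (n * (I + δ)))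
    (by positivity) hM0).trans (add_le_add ?_ ?_)
  · gcongr
    calc √((2 : ℝ) ^ (n * (I + δ)) / M) ≤ √(2 ^ (n * (I + δ)) / 2 ^ (n * (I + 2 * δ))) := by
          gcongr
      _ = (2 ^ (-δ / 2)) ^ n := by
          rw [← Real.rpow_sub two_pos, Real.sqrt_eq_rpow, ← Real.rpow_mul two_pos.le,
            ← Real.rpow_natCast, ← Real.rpow_mul two_pos.le]
          ring_nf
  · calc _ ≤ ∑ z : Fin n → 𝒰 × 𝒱 with n * (I + δ) < ∑ i, infoDensity QU W (z i).1 (z i).2,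
          pmfPi (jointPmf QU W) z := sum_filter_lt_channelPi_le hQU hW _
      _ ≤ _ := by
          have := sum_pmfPi_filter_lt_sum_le (ι := Fin n) (hQU.jointPmf hW)
            (fun z => infoDensity QU W z.1 z.2) hδ
          simp only [hI, Fintype.card_fin] at this
          rwa [div_div]

theorem cloud_mixing_general
    {𝒰 𝒱 : Type} [Fintype 𝒰] [Fintype 𝒱] [DecidableEq 𝒰] [DecidableEq 𝒱]
    (QU : 𝒰 → ℝ) (W : 𝒰 → 𝒱 → ℝ) (hQU : IsPmf QU) (hW : ∀ u, IsPmf (W u))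
    (R : ℝ)
    (hR : mi (fun uv : 𝒰 × 𝒱 => QU uv.1 * W uv.1 uv.2) Prod.fst Prod.snd < R) :
    Tendsto (fun n : ℕ =>
        -- expectation over the random codebook `B`
        ∑ B : Fin ⌈(2 : ℝ) ^ ((n : ℝ) * R)⌉₊ → Fin n → 𝒰,
          (∏ m, ∏ k, QU (B m k)) *
            TV
              (fun v : Fin n → 𝒱 =>
                (1 / (⌈(2 : ℝ) ^ ((n : ℝ) * R)⌉₊ : ℝ)) *
                  ∑ m, ∏ k, W (B m k) (v k))
              (fun v : Fin n → 𝒱 => ∏ k, ∑ u, QU u * W u (v k)))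
      atTop (nhds 0) := by
  set I := ∑ z, jointPmf QU W z * infoDensity QU W z.1 z.2
  have hIR : I < R := (mi_jointPmf hW).symm.trans_lt hR
  set δ := (R - I) / 2
  have hδ : 0 < δ := by simp only [δ]; linarith
  have hgeometric : Tendsto (fun n : ℕ => ((2 : ℝ) ^ (-δ / 2)) ^ n / 2) atTop (nhds 0) := by
    simpa using (tendsto_pow_atTop_nhds_zero_of_lt_one (by positivity)
      (Real.rpow_lt_one_of_one_lt_of_neg one_lt_two (by linarith))).div_const 2
  refine squeeze_zero' (Eventually.of_forall fun n => ?_)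
    (eventually_atTop.2 ⟨1, fun n hn => sum_codebook_TV_le hQU hW rfl hδ hn ?_⟩)
    (by simpa using hgeometric.add (tendsto_const_div_atTop_nhds_zero_nat _))
  · exact sum_nonneg fun B _ => mul_nonneg (hQU.pi.pi.1 B)
      (div_nonneg (sum_nonneg fun _ _ => abs_nonneg _) two_pos.le)
  · rw [show I + 2 * δ = R by simp only [δ]; ring]
    exact Nat.le_ceil _

/-- **Cloud-mixing (soft covering) lemma.**  Let `Q_U` be a source pmf and
`W = Q_{V|U}` a channel, with joint `Q_{UV}(u,v) = Q_U(u) W(u)(v)`.  If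
`R > I(U;V)`, then the expected total variation between the output
distribution of a random codebook of `⌈2^{nR}⌉` iid `Q_U^n` codewords, mixed
uniformly through the channel, and the iid output distribution `Q_V^n`
vanishes as `n → ∞`. -/
theorem cloud_mixing
    {𝒰 𝒱 : Type} [Fintype 𝒰] [Fintype 𝒱] [DecidableEq 𝒰] [DecidableEq 𝒱]
    [Nonempty 𝒰] [Nonempty 𝒱]
    (QU : 𝒰 → ℝ) (W : 𝒰 → 𝒱 → ℝ) (hQU : IsPmf QU) (hW : ∀ u, IsPmf (W u))
    (R : ℝ)
    (hR : mi (fun uv : 𝒰 × 𝒱 => QU uv.1 * W uv.1 uv.2) Prod.fst Prod.snd < R) :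
    Tendsto (fun n : ℕ =>
        -- expectation over the random codebook `B`
        ∑ B : Fin ⌈(2 : ℝ) ^ ((n : ℝ) * R)⌉₊ → Fin n → 𝒰,
          (∏ m, ∏ k, QU (B m k)) *
            TV
              (fun v : Fin n → 𝒱 =>
                (1 / (⌈(2 : ℝ) ^ ((n : ℝ) * R)⌉₊ : ℝ)) *
                  ∑ m, ∏ k, W (B m k) (v k))
              (fun v : Fin n → 𝒱 => ∏ k, ∑ u, QU u * W u (v k)))
      atTop (nhds 0) :=
  cloud_mixing_general QU W hQU hW R hR
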